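/- arXiv:1811.08014 — 6 statements merged into one kernel-verified Lean document; each statement's English description precedes it below -/
import Mathlib

section
/- In a CGW-category, given a composition of m-morphisms C ↣ B ↣ A, there is an induced e-morphism B^{c/A} ↠ C^{c/A} between cokernels such that the triangle of e-morphisms B^{c/A} ↠ C^{c/A} ↠ A commutes (i.e., the composite B^{c/A} ↠ C^{c/A} ↠ A equals the cokernel e-morphism B^{c/A} ↠ A). -/
open CategoryTheory

/-- The data of a CGW-category (Campbell–Zakharevich): a double category given by
two classes of morphisms `Em` (e-morphisms, drawn `↠`) and `Mm` (m-morphisms, drawn `↣`)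
on a common class of objects, a class of distinguished squares, a common initial object,
the comparison `phi` between e- and m-morphisms (used on isomorphisms), and the
kernel/cokernel assignments `k` and `c`. -/
structure CGWData where
  Obj : Type
  Em : Obj → Obj → Type
  Mm : Obj → Obj → Type
  idE : ∀ A, Em A A
  compE : ∀ {A B C}, Em A B → Em B C → Em A C
  idM : ∀ A, Mm A A
  compM : ∀ {A B C}, Mm A B → Mm B C → Mm A C
  /-- `Dist top left bottom right` : a distinguished square with m-morphisms
  `top : TL ↣ TR`, `bottom : BL ↣ BR` and e-morphisms `left : TL ↠ BL`,
  `right : TR ↠ BR`. -/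
  Dist : ∀ {A B P Q}, Mm A B → Em A P → Mm P Q → Em B Q → Prop
  zero : Obj
  initE : ∀ A, Em zero A
  initM : ∀ A, Mm zero A
  phi : ∀ {A B}, Em A B → Mm A B
  kObj : ∀ {A B}, Em A B → Obj
  kMor : ∀ {A B} (g : Em A B), Mm (kObj g) B
  cObj : ∀ {A B}, Mm A B → Obj
  cMor : ∀ {A B} (f : Mm A B), Em (cObj f) B

namespace CGWData

variable (C : CGWData)

def IsIsoE {A B : C.Obj} (f : C.Em A B) : Prop :=
  ∃ g : C.Em B A, C.compE f g = C.idE A ∧ C.compE g f = C.idE B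

def IsIsoM {A B : C.Obj} (f : C.Mm A B) : Prop :=
  ∃ g : C.Mm B A, C.compM f g = C.idM A ∧ C.compM g f = C.idM B

/-- The axioms of a CGW-category, on top of the data of a `CGWData`:
(Z) `zero` is initial in both `Em` and `Mm`; (I) isomorphism squares are distinguished;
(M) all e- and m-morphisms are monic; (K) kernels/cokernels fit into distinguished
squares over the initial object, unique up to unique isomorphism, `c` and `k` are
mutually inverse equivalences (encoded by equifiberedness/equicofiberedness of
distinguished squares, fullness on triangles, and `c`,`k` being mutually inverse on
objects); (A) existence of "sum" squares. -/
structure IsCGW : Prop where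
  idE_comp : ∀ {A B : C.Obj} (f : C.Em A B), C.compE (C.idE A) f = f
  compE_id : ∀ {A B : C.Obj} (f : C.Em A B), C.compE f (C.idE B) = f
  assocE : ∀ {A B D E : C.Obj} (f : C.Em A B) (g : C.Em B D) (h : C.Em D E),
    C.compE (C.compE f g) h = C.compE f (C.compE g h)
  idM_comp : ∀ {A B : C.Obj} (f : C.Mm A B), C.compM (C.idM A) f = f
  compM_id : ∀ {A B : C.Obj} (f : C.Mm A B), C.compM f (C.idM B) = f
  assocM : ∀ {A B D E : C.Obj} (f : C.Mm A B) (g : C.Mm B D) (h : C.Mm D E),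
    C.compM (C.compM f g) h = C.compM f (C.compM g h)
  initE_unique : ∀ {A : C.Obj} (f : C.Em C.zero A), f = C.initE A
  initM_unique : ∀ {A : C.Obj} (f : C.Mm C.zero A), f = C.initM A
  monoE : ∀ {Z A B : C.Obj} (f : C.Em A B) (u v : C.Em Z A),
    C.compE u f = C.compE v f → u = v
  monoM : ∀ {Z A B : C.Obj} (f : C.Mm A B) (u v : C.Mm Z A),
    C.compM u f = C.compM v f → u = v
  phi_iso : ∀ {A B : C.Obj} (f : C.Em A B), C.IsIsoE f → C.IsIsoM (C.phi f)
  dist_isoSq₁ : ∀ {A B : C.Obj} (f : C.Em A B), C.IsIsoE f →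
    C.Dist (C.phi f) f (C.idM B) (C.idE B)
  dist_isoSq₂ : ∀ {A B : C.Obj} (f : C.Em A B), C.IsIsoE f →
    C.Dist (C.idM A) (C.idE A) (C.phi f) f
  dist_horiz : ∀ {A B P Q B₂ Q₂ : C.Obj} {f : C.Mm A B} {g : C.Em A P} {f' : C.Mm P Q}
    {g' : C.Em B Q} {f₂ : C.Mm B B₂} {f₂' : C.Mm Q Q₂} {g₂ : C.Em B₂ Q₂},
    C.Dist f g f' g' → C.Dist f₂ g' f₂' g₂ →
      C.Dist (C.compM f f₂) g (C.compM f' f₂') g₂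
  dist_vert : ∀ {A B P Q P₂ Q₂ : C.Obj} {f : C.Mm A B} {g : C.Em A P} {f' : C.Mm P Q}
    {g' : C.Em B Q} {g₂ : C.Em P P₂} {f₂ : C.Mm P₂ Q₂} {g₂' : C.Em Q Q₂},
    C.Dist f g f' g' → C.Dist f' g₂ f₂ g₂' →
      C.Dist f (C.compE g g₂) f₂ (C.compE g' g₂')
  kDist : ∀ {A B : C.Obj} (g : C.Em A B),
    C.Dist (C.initM A) (C.initE (C.kObj g)) (C.kMor g) g
  cDist : ∀ {A B : C.Obj} (f : C.Mm A B),
    C.Dist (C.initM (C.cObj f)) (C.initE A) f (C.cMor f)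
  k_unique : ∀ {A B K : C.Obj} (g : C.Em A B) (m : C.Mm K B),
    C.Dist (C.initM A) (C.initE K) m g →
      ∃! φ : C.Mm K (C.kObj g), C.IsIsoM φ ∧ C.compM φ (C.kMor g) = m
  c_unique : ∀ {A B K : C.Obj} (f : C.Mm A B) (e : C.Em K B),
    C.Dist (C.initM K) (C.initE A) f e →
      ∃! ψ : C.Em K (C.cObj f), C.IsIsoE ψ ∧ C.compE ψ (C.cMor f) = e
  distKer : ∀ {A B P Q : C.Obj} {f : C.Mm A B} {g : C.Em A P} {f' : C.Mm P Q}
    {g' : C.Em B Q}, C.Dist f g f' g' →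
      ∃ φ : C.Mm (C.kObj g) (C.kObj g'), C.IsIsoM φ ∧
        C.compM (C.kMor g) f' = C.compM φ (C.kMor g')
  distCoker : ∀ {A B P Q : C.Obj} {f : C.Mm A B} {g : C.Em A P} {f' : C.Mm P Q}
    {g' : C.Em B Q}, C.Dist f g f' g' →
      ∃ ψ : C.Em (C.cObj f) (C.cObj f'), C.IsIsoE ψ ∧
        C.compE (C.cMor f) g' = C.compE ψ (C.cMor f')
  c_full : ∀ {A B A₂ B₂ : C.Obj} (f : C.Mm A B) (f₂ : C.Mm A₂ B₂)
    (ι : C.Em (C.cObj f) (C.cObj f₂)) (e : C.Em B B₂), C.IsIsoE ι →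
    C.compE (C.cMor f) e = C.compE ι (C.cMor f₂) →
      ∃ eA : C.Em A A₂, C.Dist f eA f₂ e
  k_full : ∀ {A P A₂ P₂ : C.Obj} (g : C.Em A P) (g₂ : C.Em A₂ P₂)
    (ι : C.Mm (C.kObj g) (C.kObj g₂)) (m : C.Mm P P₂), C.IsIsoM ι →
    C.compM (C.kMor g) m = C.compM ι (C.kMor g₂) →
      ∃ mA : C.Mm A A₂, C.Dist mA g m g₂
  ck : ∀ {A B : C.Obj} (g : C.Em A B),
    ∃ ι : C.Em A (C.cObj (C.kMor g)), C.IsIsoE ι ∧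
      C.compE ι (C.cMor (C.kMor g)) = g
  kc : ∀ {A B : C.Obj} (f : C.Mm A B),
    ∃ ι : C.Mm A (C.kObj (C.cMor f)), C.IsIsoM ι ∧
      C.compM ι (C.kMor (C.cMor f)) = f
  axA : ∀ A B : C.Obj, ∃ (X : C.Obj) (m : C.Mm B X) (e : C.Em A X),
    C.Dist (C.initM A) (C.initE B) m e

end CGWData

/-- Lemma 2.13 of Campbell–Zakharevich: given composable m-morphisms
`C ↣ B ↣ A`, there is an induced e-morphism `B^{c/A} ↠ C^{c/A}` between the
cokernels such that the triangle `B^{c/A} ↠ C^{c/A} ↠ A` commutes, i.e. its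
composite with the cokernel e-morphism `C^{c/A} ↠ A` is the cokernel e-morphism
`B^{c/A} ↠ A`.  Here `B^{c/A} = cObj g` for `g : B ↣ A` and
`C^{c/A} = cObj (g ∘ f)` for `f : C ↣ B`. -/
theorem cokernel_triangle (𝒞 : CGWData) (h𝒞 : 𝒞.IsCGW) {Cc B A : 𝒞.Obj}
    (f : 𝒞.Mm Cc B) (g : 𝒞.Mm B A) :
    ∃ e : 𝒞.Em (𝒞.cObj g) (𝒞.cObj (𝒞.compM f g)),
      𝒞.compE e (𝒞.cMor (𝒞.compM f g)) = 𝒞.cMor g := by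
  obtain ⟨ι₁, ⟨ι₁inv, h11, h12⟩, hι₁⟩ := h𝒞.kc f
  obtain ⟨ι₂, ⟨ι₂inv, h21, h22⟩, hι₂⟩ := h𝒞.kc (𝒞.compM f g)
  -- the induced iso between the kernels of the two cokernel e-morphisms
  have hιiso : 𝒞.IsIsoM (𝒞.compM ι₁inv ι₂) := by
    refine ⟨𝒞.compM ι₂inv ι₁, ?_, ?_⟩
    · rw [h𝒞.assocM, ← h𝒞.assocM ι₂ ι₂inv ι₁, h21, h𝒞.idM_comp, h12]
    · rw [h𝒞.assocM, ← h𝒞.assocM ι₁ ι₁inv ι₂, h11, h𝒞.idM_comp, h22]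
  have hker : 𝒞.kMor (𝒞.cMor f) = 𝒞.compM ι₁inv f := by
    have h := congrArg (𝒞.compM ι₁inv) hι₁
    rwa [← h𝒞.assocM, h12, h𝒞.idM_comp] at h
  have hcond : 𝒞.compM (𝒞.kMor (𝒞.cMor f)) g =
      𝒞.compM (𝒞.compM ι₁inv ι₂) (𝒞.kMor (𝒞.cMor (𝒞.compM f g))) := by
    rw [hker, h𝒞.assocM, h𝒞.assocM, hι₂]
  obtain ⟨mA, hS⟩ := h𝒞.k_full (𝒞.cMor f) (𝒞.cMor (𝒞.compM f g))
    (𝒞.compM ι₁inv ι₂) g hιiso hcond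
  obtain ⟨ψ, ⟨ψinv, hp1, hp2⟩, hψ⟩ := h𝒞.distCoker hS
  refine ⟨𝒞.compE ψinv (𝒞.cMor mA), ?_⟩
  rw [h𝒞.assocE, hψ, ← h𝒞.assocE, hp2, h𝒞.idE_comp]
end

section
/- Let C be a CGW-category and QC its Q-construction. If a morphism α : A → B in QC, represented by a diagram A ↠^f X ↣^g B, is an isomorphism in QC, then both f (in E) and g (in M) are isomorphisms in C. -/
open CategoryTheory

/-- A span `A ↠ X ↣ B`, representing a morphism of the Quillen `Q`-construction
of a CGW-category. -/
structure CGWSpan (C : CGWData) (A B : C.Obj) where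
  mid : C.Obj
  e : C.Em A mid
  m : C.Mm mid B

/-- Two spans `A ↠ X ↣ B` and `A ↠ X' ↣ B` are equivalent when there is an
isomorphism `X → X'` commuting with both legs (in `E` on the left and, via `φ`,
in `M` on the right). -/
def CGWSpan.Equiv (C : CGWData) {A B : C.Obj} (s t : CGWSpan C A B) : Prop :=
  ∃ φ : C.Em s.mid t.mid, C.IsIsoE φ ∧ C.compE s.e φ = t.e ∧
    C.compM (C.phi φ) t.m = s.m

/-- `QComp C s t u` : the span `u` is a composite of the spans `s : A → B` and
`t : B → D` in the `Q`-construction, i.e. `u` is obtained from the distinguished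
square commuting the m-morphism part of `s` past the e-morphism part of `t`. -/
def QComp (C : CGWData) {A B D : C.Obj} (s : CGWSpan C A B) (t : CGWSpan C B D)
    (u : CGWSpan C A D) : Prop :=
  ∃ (e' : C.Em s.mid u.mid) (m' : C.Mm u.mid t.mid),
    C.Dist s.m e' m' t.e ∧ u.e = C.compE s.e e' ∧ u.m = C.compM m' t.m

/-- The identity span `A ↠ A ↣ A`. -/
def CGWSpan.id (C : CGWData) (A : C.Obj) : CGWSpan C A A :=
  ⟨A, C.idE A, C.idM A⟩

/-- Since all e-morphisms are monic, a right inverse makes an e-morphism an isomorphism. -/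
lemma rightInvE (C : CGWData) (hC : C.IsCGW) {A B : C.Obj} (f : C.Em A B) (r : C.Em B A)
    (h : C.compE f r = C.idE A) : C.IsIsoE f := by
  refine ⟨r, h, ?_⟩
  apply hC.monoE r
  rw [hC.assocE, h, hC.compE_id, hC.idE_comp]

/-- Since all m-morphisms are monic, a left inverse makes an m-morphism an isomorphism. -/
lemma leftInvM (C : CGWData) (hC : C.IsCGW) {A B : C.Obj} (f : C.Mm A B) (l : C.Mm B A)
    (h : C.compM l f = C.idM B) : C.IsIsoM f := by
  refine ⟨l, ?_, h⟩
  apply hC.monoM f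
  rw [hC.assocM, h, hC.compM_id, hC.idM_comp]

/-- Lemma 3.4 of Campbell–Zakharevich: if a morphism `α : A → B` of the
`Q`-construction of a CGW-category, represented by a span `A ↠^f X ↣^g B`, is an
isomorphism in `QC` (i.e. it has a two-sided inverse span up to span equivalence),
then both `f` and `g` are isomorphisms in `C`. -/
theorem Q_iso_components_iso (C : CGWData) (hC : C.IsCGW) {A B : C.Obj}
    (s : CGWSpan C A B) (t : CGWSpan C B A) (u : CGWSpan C A A) (v : CGWSpan C B B)
    (hst : QComp C s t u) (hts : QComp C t s v)
    (hu : CGWSpan.Equiv C u (CGWSpan.id C A)) (hv : CGWSpan.Equiv C v (CGWSpan.id C B)) :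
    C.IsIsoE s.e ∧ C.IsIsoM s.m := by
  obtain ⟨e1, m1, _, hue, _⟩ := hst
  obtain ⟨e2, m2, _, _, hvm⟩ := hts
  obtain ⟨φ, hφ, hφ1, hφ2⟩ := hu
  obtain ⟨ψ, hψ, hψ1, hψ2⟩ := hv
  have hue_iso : C.IsIsoE u.e := rightInvE C hC u.e φ hφ1
  have hvm_iso : C.IsIsoM v.m := by
    have h : v.m = C.phi ψ := by rw [← hψ2]; exact hC.compM_id _
    rw [h]; exact hC.phi_iso ψ hψ
  constructor
  · obtain ⟨w, hw1, hw2⟩ := hue_iso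
    exact rightInvE C hC s.e (C.compE e1 w) (by rw [← hC.assocE, ← hue, hw1])
  · obtain ⟨q, hq1, hq2⟩ := hvm_iso
    exact leftInvM C hC s.m (C.compM q m2) (by rw [hC.assocM, ← hvm, hq2])
end

section
/- Equivalently stated at the level of group presentations: the fundamental group of the classifying space of QC, computed from the presentation with generators the morphisms of QC and relations [∅ ↣ A] = 1 and [f]·[g] = [f∘g], is generated by the classes [A] := [∅ ↠ A] and satisfies, for every distinguished square with corners A, B, D, C, the relation [B]⁻¹[C] = [A]⁻¹[D]. -/
open CategoryTheory

/-- The vertex set of the quiver underlying the `Q`-construction. -/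
def QV (C : CGWData) : Type := C.Obj

instance (C : CGWData) : Quiver (QV C) :=
  ⟨fun A B => Sum (C.Em A B) (C.Mm A B)⟩

/-- Objects of `QV C` / `Paths (QV C)` coming from objects of `C`. -/
def pobj (C : CGWData) (A : C.Obj) : CategoryTheory.Paths (QV C) := A

/-- The morphism of `Paths (QV C)` given by a single e-morphism edge. -/
def pE (C : CGWData) {A B : C.Obj} (e : C.Em A B) : pobj C A ⟶ pobj C B :=
  Quiver.Hom.toPath (Sum.inl e)

/-- The morphism of `Paths (QV C)` given by a single m-morphism edge. -/
def pM (C : CGWData) {A B : C.Obj} (m : C.Mm A B) : pobj C A ⟶ pobj C B :=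
  Quiver.Hom.toPath (Sum.inr m)

/-- The relations presenting the `Q`-construction of a CGW-category as a quotient of
the path category on the quiver with an edge `A → B` for every e-morphism and every
m-morphism `A → B`: identities and composition within `E` and within `M`, and the
relation `[f][g'] = [g][f']` for every distinguished square. -/
inductive QRel (C : CGWData) : ∀ {X Y : CategoryTheory.Paths (QV C)},
    (X ⟶ Y) → (X ⟶ Y) → Prop
  | relIdE (A : C.Obj) : QRel C (pE C (C.idE A)) (𝟙 (pobj C A))
  | relIdM (A : C.Obj) : QRel C (pM C (C.idM A)) (𝟙 (pobj C A))
  | relCompE {A B D : C.Obj} (e₁ : C.Em A B) (e₂ : C.Em B D) :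
      QRel C (pE C e₁ ≫ pE C e₂) (pE C (C.compE e₁ e₂))
  | relCompM {A B D : C.Obj} (m₁ : C.Mm A B) (m₂ : C.Mm B D) :
      QRel C (pM C m₁ ≫ pM C m₂) (pM C (C.compM m₁ m₂))
  | relDist {A B P Q : C.Obj} {f : C.Mm A B} {g : C.Em A P} {f' : C.Mm P Q}
      {g' : C.Em B Q} : C.Dist f g f' g' →
      QRel C (pM C f ≫ pE C g') (pE C g ≫ pM C f')

def qRel (C : CGWData) : HomRel (CategoryTheory.Paths (QV C)) :=
  fun {X Y} p q => QRel C (X := X) (Y := Y) p q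

/-- The `Q`-construction of a CGW-category, as a quotient of a path category. -/
def QCat (C : CGWData) : Type := CategoryTheory.Quotient (qRel C)

instance (C : CGWData) : CategoryTheory.Category (QCat C) :=
  inferInstanceAs (CategoryTheory.Category (CategoryTheory.Quotient (qRel C)))

/-- An object of `C` seen in `QCat C`. -/
def qobj (C : CGWData) (A : C.Obj) : QCat C :=
  (CategoryTheory.Quotient.functor (qRel C)).obj (pobj C A)

/-- A path seen in `QCat C`. -/
def qmap (C : CGWData) {A B : C.Obj} (p : pobj C A ⟶ pobj C B) :
    qobj C A ⟶ qobj C B :=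
  (CategoryTheory.Quotient.functor (qRel C)).map p

open CategoryTheory in
/-- Generators for the standard presentation of `π₁(BQC)`: all morphisms of `QC`. -/
def QGen (C : CGWData) : Type := Σ (A B : C.Obj), (qobj C A ⟶ qobj C B)

open CategoryTheory in
/-- The relations of the standard presentation of `π₁(BQC)` coming from the maximal
tree `{∅ ↣ A}` and from composition: `[∅ ↣ A] = 1` and `[f]·[g] = [f ∘ g]`. -/
def QPresRels (C : CGWData) : Set (FreeGroup (QGen C)) :=
  {w | ∃ A : C.Obj, w = FreeGroup.of ⟨C.zero, A, qmap C (pM C (C.initM A))⟩} ∪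
  {w | ∃ (A B D : C.Obj) (f : qobj C A ⟶ qobj C B) (g : qobj C B ⟶ qobj C D),
    w = FreeGroup.of ⟨A, B, f⟩ * FreeGroup.of ⟨B, D, g⟩ *
      (FreeGroup.of ⟨A, D, f ≫ g⟩)⁻¹}

open CategoryTheory in
/-- The class `[A] := [∅ ↠ A]` in the presented fundamental group. -/
def QPresCls (C : CGWData) (A : C.Obj) : PresentedGroup (QPresRels C) :=
  PresentedGroup.of ⟨C.zero, A, qmap C (pE C (C.initE A))⟩

/-! Since `[∅ ↣ A] = 1` and `∅ ↣ A ↣ B = ∅ ↣ B`, every m-morphism has trivial class,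
while `∅ ↠ A ↠ B = ∅ ↠ B` shows that an e-morphism `A ↠ B` has class `[A]⁻¹[B]`.
As `QC` is generated by e- and m-morphisms, the classes `[A]` generate, and the relation
`[f][g'] = [g][f']` of a distinguished square becomes `[B]⁻¹[Q] = [A]⁻¹[P]`. -/

namespace QPresentation

open CategoryTheory

variable (C : CGWData)

def homCls {A B : C.Obj} (f : qobj C A ⟶ qobj C B) : PresentedGroup (QPresRels C) :=
  PresentedGroup.of ⟨A, B, f⟩

abbrev objClsClosure : Subgroup (PresentedGroup (QPresRels C)) :=
  Subgroup.closure {x | ∃ A, x = QPresCls C A}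

theorem mk_eq_one_of_mem_rels {w : FreeGroup (QGen C)} (hw : w ∈ QPresRels C) :
    (QuotientGroup.mk w : PresentedGroup (QPresRels C)) = 1 :=
  (QuotientGroup.eq_one_iff w).mpr (Subgroup.subset_normalClosure hw)

theorem homCls_comp {A B D : C.Obj} (f : qobj C A ⟶ qobj C B) (g : qobj C B ⟶ qobj C D) :
    homCls C f * homCls C g = homCls C (f ≫ g) := by
  have h := mk_eq_one_of_mem_rels C (Or.inr ⟨A, B, D, f, g, rfl⟩)
  rwa [QuotientGroup.mk_mul, QuotientGroup.mk_mul, QuotientGroup.mk_inv,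
    mul_inv_eq_one] at h

theorem homCls_id (A : C.Obj) : homCls C (𝟙 (qobj C A)) = 1 :=
  mul_eq_left.mp <| by rw [homCls_comp C (𝟙 _), Category.comp_id]

theorem homCls_initM (A : C.Obj) : homCls C (qmap C (pM C (C.initM A))) = 1 :=
  mk_eq_one_of_mem_rels C (Or.inl ⟨A, rfl⟩)

theorem qmap_comp {A B D : C.Obj} (p : pobj C A ⟶ pobj C B) (q : pobj C B ⟶ pobj C D) :
    qmap C (p ≫ q) = qmap C p ≫ qmap C q :=
  Functor.map_comp _ p q

theorem qmap_eq_of_rel {A B : C.Obj} {p q : pobj C A ⟶ pobj C B} (h : QRel C p q) :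
    qmap C p = qmap C q :=
  CategoryTheory.Quotient.sound _ h

variable {C}

theorem homCls_pM (hC : C.IsCGW) {A B : C.Obj} (m : C.Mm A B) :
    homCls C (qmap C (pM C m)) = 1 := by
  have hcomp : qmap C (pM C (C.initM A)) ≫ qmap C (pM C m) = qmap C (pM C (C.initM B)) := by
    rw [← qmap_comp, qmap_eq_of_rel C (.relCompM _ m), hC.initM_unique (C.compM _ m)]
  have h := homCls_comp C (qmap C (pM C (C.initM A))) (qmap C (pM C m))
  rwa [hcomp, homCls_initM, homCls_initM, one_mul] at h

theorem homCls_pE (hC : C.IsCGW) {A B : C.Obj} (e : C.Em A B) :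
    homCls C (qmap C (pE C e)) = (QPresCls C A)⁻¹ * QPresCls C B := by
  have hcomp : qmap C (pE C (C.initE A)) ≫ qmap C (pE C e) = qmap C (pE C (C.initE B)) := by
    rw [← qmap_comp, qmap_eq_of_rel C (.relCompE _ e), hC.initE_unique (C.compE _ e)]
  have h := homCls_comp C (qmap C (pE C (C.initE A))) (qmap C (pE C e))
  rw [hcomp] at h
  exact eq_inv_mul_iff_mul_eq.mpr h

theorem homCls_edge_mem (hC : C.IsCGW) {A B : C.Obj} (e : @Quiver.Hom (QV C) _ A B) :
    homCls C (qmap C (A := A) (B := B) e.toPath) ∈ objClsClosure C := by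
  rcases e with e | m
  · change homCls C (qmap C (pE C e)) ∈ _
    rw [homCls_pE hC]
    exact mul_mem (inv_mem (Subgroup.subset_closure ⟨A, rfl⟩))
      (Subgroup.subset_closure ⟨B, rfl⟩)
  · change homCls C (qmap C (pM C m)) ∈ _
    rw [homCls_pM hC]
    exact one_mem _

theorem homCls_path_mem (hC : C.IsCGW) {A B : QV C} (p : Quiver.Path A B) :
    homCls C (qmap C (A := A) (B := B) p) ∈ objClsClosure C := by
  induction p with
  | nil => exact homCls_id C A ▸ one_mem _
  | @cons X Y p e ih =>
    exact homCls_comp C (qmap C (A := A) (B := X) p) (qmap C (A := X) (B := Y) e.toPath) ▸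
      mul_mem ih (homCls_edge_mem hC e)

theorem homCls_mem (hC : C.IsCGW) {A B : C.Obj} (f : qobj C A ⟶ qobj C B) :
    homCls C f ∈ objClsClosure C :=
  Quot.inductionOn f (homCls_path_mem hC)

theorem objClsClosure_eq_top (hC : C.IsCGW) : objClsClosure C = ⊤ := by
  rw [eq_top_iff, ← PresentedGroup.closure_range_of, Subgroup.closure_le]
  rintro _ ⟨⟨A, B, f⟩, rfl⟩
  exact homCls_mem hC f

theorem homCls_dist {A B P Q : C.Obj} {f : C.Mm A B} {g : C.Em A P} {f' : C.Mm P Q}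
    {g' : C.Em B Q} (hD : C.Dist f g f' g') :
    homCls C (qmap C (pM C f)) * homCls C (qmap C (pE C g')) =
      homCls C (qmap C (pE C g)) * homCls C (qmap C (pM C f')) := by
  rw [homCls_comp, homCls_comp, ← qmap_comp, ← qmap_comp, qmap_eq_of_rel C (.relDist hD)]

end QPresentation

open CategoryTheory in
/-- the fundamental group of `BQC`, presented with generators the
morphisms of `QC` and relations `[∅ ↣ A] = 1`, `[f]·[g] = [f ∘ g]`, is generated by
the classes `[A] = [∅ ↠ A]`, and for every distinguished square with corners
`A` (upper-left), `B` (upper-right), `P` (lower-left), `Q` (lower-right) it satisfies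
`[B]⁻¹[Q] = [A]⁻¹[P]`. -/
theorem pi1_presentation (C : CGWData) (hC : C.IsCGW) :
    (Subgroup.closure {x : PresentedGroup (QPresRels C) | ∃ A, x = QPresCls C A} = ⊤) ∧
    (∀ {A B P Q : C.Obj} {f : C.Mm A B} {g : C.Em A P} {f' : C.Mm P Q} {g' : C.Em B Q},
      C.Dist f g f' g' →
        (QPresCls C B)⁻¹ * QPresCls C Q = (QPresCls C A)⁻¹ * QPresCls C P) := by
  refine ⟨QPresentation.objClsClosure_eq_top hC, fun hD => ?_⟩
  simpa only [QPresentation.homCls_pM hC, QPresentation.homCls_pE hC, one_mul, mul_one]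
    using QPresentation.homCls_dist hD
end

section
/- The category FinSet of finite sets, with both e-morphisms and m-morphisms given by injections, distinguished squares given by pushout squares of injections (which are also pullback squares), and c and k both sending an injection A ↪ B to the inclusion of the complement B∖A ↪ B, satisfies the axioms of a CGW-category. -/
open CategoryTheory

/-- The underlying type of a finite set `A : Finset ℕ`. -/
abbrev FinEl (A : Finset ℕ) : Type := {x : ℕ // x ∈ A}

/-- Injections between finite sets. -/
def FinInj (A B : Finset ℕ) : Type := {f : FinEl A → FinEl B // Function.Injective f}

/-- The complement `B ∖ f(A)` of an injection `f : A ↪ B`. -/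
def finCompl {A B : Finset ℕ} (f : FinInj A B) : Finset ℕ :=
  B \ (A.attach.image fun a => ((f.1 a : ℕ)))

/-- The inclusion of the complement `B ∖ f(A) ↪ B`. -/
def finComplIncl {A B : Finset ℕ} (f : FinInj A B) : FinInj (finCompl f) B :=
  ⟨fun x => ⟨x.1, (Finset.mem_sdiff.mp x.2).1⟩, by
    intro a b h
    have h' := congrArg Subtype.val h
    exact Subtype.ext h'⟩


/-- The CGW-category of finite sets: both e-morphisms and m-morphisms are
injections, distinguished squares are the pushout squares of injections (equivalently
pullback squares which are jointly surjective), and `c` and `k` send an injection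
`A ↪ B` to the inclusion of the complement `B ∖ A ↪ B`. -/
def finSetCGW : CGWData where
  Obj := Finset ℕ
  Em := FinInj
  Mm := FinInj
  idE A := ⟨id, fun _ _ h => h⟩
  compE f g := ⟨g.1 ∘ f.1, fun a b h => f.2 (g.2 h)⟩
  idM A := ⟨id, fun _ _ h => h⟩
  compM f g := ⟨g.1 ∘ f.1, fun a b h => f.2 (g.2 h)⟩
  Dist {A B P Q} f g f' g' :=
    (∀ a, f'.1 (g.1 a) = g'.1 (f.1 a)) ∧
    (∀ q, (∃ b, g'.1 b = q) ∨ (∃ p, f'.1 p = q)) ∧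
    (∀ b p, g'.1 b = f'.1 p → ∃ a, f.1 a = b ∧ g.1 a = p)
  zero := (∅ : Finset ℕ)
  initE A := ⟨fun x => absurd x.2 (Finset.notMem_empty x.1),
    fun x => absurd x.2 (Finset.notMem_empty x.1)⟩
  initM A := ⟨fun x => absurd x.2 (Finset.notMem_empty x.1),
    fun x => absurd x.2 (Finset.notMem_empty x.1)⟩
  phi f := f
  kObj g := finCompl g
  kMor g := finComplIncl g
  cObj f := finCompl f
  cMor f := finComplIncl f

/-! The axioms reduce to three facts about an injection: it is determined up to unique
isomorphism by its range, the complement inclusion has the complementary range, and a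
commuting square of injections `f ≫ g' = g ≫ f'` is distinguished exactly when `g'` carries
the complement of `range f` onto the complement of `range f'`. Kernels and cokernels are
then complements, and the transpose of a distinguished square is distinguished, so every
`c`-axiom is the `k`-axiom of the transposed square. -/

namespace FinInj

variable {A B : Finset ℕ}

theorem ext {f g : FinInj A B} (h : ∀ x, (f.1 x : ℕ) = g.1 x) : f = g :=
  Subtype.ext (funext fun x => Subtype.ext (h x))

theorem eq_of_empty (f g : FinInj ∅ A) : f = g :=
  ext fun x => absurd x.2 (Finset.notMem_empty x.1)

theorem range_finComplIncl (f : FinInj A B) :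
    Set.range (finComplIncl f).1 = (Set.range f.1)ᶜ := by
  ext ⟨n, hn⟩
  simp [finComplIncl, finCompl, Subtype.ext_iff, hn]

end FinInj

namespace finSetCGW

open FinInj

variable {A B P Q K K' A₂ B₂ : Finset ℕ}

theorem compM_right_cancel (f : FinInj A B) (u v : FinInj K A)
    (h : finSetCGW.compM u f = finSetCGW.compM v f) : u = v :=
  Subtype.ext (funext fun x => f.2 (congrFun (congrArg Subtype.val h) x))

theorem isIsoM_of_bijective (f : FinInj A B) (h : Function.Bijective f.1) :
    finSetCGW.IsIsoM f := by
  obtain ⟨g, hgf, hfg⟩ := Function.bijective_iff_has_inverse.mp h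
  exact ⟨⟨g, hfg.injective⟩, Subtype.ext (funext hgf), Subtype.ext (funext hfg)⟩

theorem surjective_of_isIsoM {f : FinInj A B} (h : finSetCGW.IsIsoM f) :
    Function.Surjective f.1 := by
  obtain ⟨g, -, hfg⟩ := h
  exact fun b => ⟨g.1 b, congrFun (congrArg Subtype.val hfg) b⟩

theorem existsUnique_isIsoM_comp_eq_of_range_eq (m : FinInj K B) (m' : FinInj K' B)
    (h : Set.range m.1 = Set.range m'.1) :
    ∃! φ : FinInj K K', finSetCGW.IsIsoM φ ∧ finSetCGW.compM φ m' = m := by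
  let φ : FinEl K ≃ FinEl K' := (Equiv.ofInjective m.1 m.2).trans
    ((Equiv.setCongr h).trans (Equiv.ofInjective m'.1 m'.2).symm)
  have hφ : finSetCGW.compM ⟨φ, φ.injective⟩ m' = m :=
    ext fun k => congrArg Subtype.val (Equiv.apply_ofInjective_symm m'.2 _)
  exact ⟨_, ⟨isIsoM_of_bijective _ φ.bijective, hφ⟩,
    fun ψ ⟨_, hψ⟩ => compM_right_cancel m' _ _ (hψ.trans hφ.symm)⟩

section Dist

variable {f : FinInj A B} {g : FinInj A P} {f' : FinInj P Q} {g' : FinInj B Q}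

theorem dist_symm (h : finSetCGW.Dist f g f' g') : finSetCGW.Dist g f g' f' := by
  obtain ⟨hcomm, hcover, hpull⟩ := h
  exact ⟨fun a => (hcomm a).symm, fun q => (hcover q).symm,
    fun b p hq => (hpull p b hq.symm).imp fun _ ha => ha.symm⟩

theorem dist_compM {B₂ Q₂ : Finset ℕ} {f₂ : FinInj B B₂} {f₂' : FinInj Q Q₂}
    {g₂ : FinInj B₂ Q₂} (h : finSetCGW.Dist f g f' g') (h₂ : finSetCGW.Dist f₂ g' f₂' g₂) :
    finSetCGW.Dist (finSetCGW.compM f f₂) g (finSetCGW.compM f' f₂') g₂ := by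
  obtain ⟨hcomm, hcover, hpull⟩ := h
  obtain ⟨hcomm₂, hcover₂, hpull₂⟩ := h₂
  refine ⟨fun a => (congrArg f₂'.1 (hcomm a)).trans (hcomm₂ (f.1 a)), fun q => ?_, ?_⟩
  · rcases hcover₂ q with hq | ⟨q', rfl⟩
    · exact Or.inl hq
    · rcases hcover q' with ⟨b, rfl⟩ | ⟨p, rfl⟩
      · exact Or.inl ⟨f₂.1 b, (hcomm₂ b).symm⟩
      · exact Or.inr ⟨p, rfl⟩
  · intro b₂ p hq
    obtain ⟨b, rfl, hb⟩ := hpull₂ b₂ (f'.1 p) hq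
    obtain ⟨a, rfl, rfl⟩ := hpull b p hb
    exact ⟨a, rfl, rfl⟩

theorem image_compl_range_of_dist (h : finSetCGW.Dist f g f' g') :
    g'.1 '' (Set.range f.1)ᶜ = (Set.range f'.1)ᶜ := by
  obtain ⟨hcomm, hcover, hpull⟩ := h
  ext q
  constructor
  · rintro ⟨b, hb, rfl⟩ ⟨p, hp⟩
    obtain ⟨a, rfl, -⟩ := hpull b p hp.symm
    exact hb ⟨a, rfl⟩
  · intro hq
    obtain ⟨b, rfl⟩ := (hcover q).resolve_right hq
    refine ⟨b, ?_, rfl⟩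
    rintro ⟨a, rfl⟩
    exact hq ⟨g.1 a, hcomm a⟩

theorem dist_of_image_compl_range (hcomm : ∀ a, f'.1 (g.1 a) = g'.1 (f.1 a))
    (h : g'.1 '' (Set.range f.1)ᶜ = (Set.range f'.1)ᶜ) : finSetCGW.Dist f g f' g' := by
  refine ⟨hcomm, fun q => ?_, fun b p hq => ?_⟩
  · by_cases hq : q ∈ Set.range f'.1
    · exact Or.inr hq
    · obtain ⟨b, -, rfl⟩ : q ∈ g'.1 '' (Set.range f.1)ᶜ := by rw [h]; exact hq
      exact Or.inl ⟨b, rfl⟩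
  · by_cases hb : b ∈ Set.range f.1
    · obtain ⟨a, rfl⟩ := hb
      exact ⟨a, rfl, f'.2 ((hcomm a).trans hq)⟩
    · have : g'.1 b ∈ (Set.range f'.1)ᶜ := h ▸ Set.mem_image_of_mem g'.1 hb
      exact absurd ⟨p, hq.symm⟩ this

end Dist

theorem dist_self_idM_of_isIsoM (f : FinInj A B) (hf : finSetCGW.IsIsoM f) :
    finSetCGW.Dist f f (finSetCGW.idM B) (finSetCGW.idE B) :=
  dist_of_image_compl_range (fun _ => rfl) <| by
    simp [finSetCGW, (surjective_of_isIsoM hf).range_eq]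

theorem dist_idM_self_of_isIsoM (f : FinInj A B) (hf : finSetCGW.IsIsoM f) :
    finSetCGW.Dist (finSetCGW.idM A) (finSetCGW.idE A) f f :=
  dist_of_image_compl_range (fun _ => rfl) <| by
    simp [finSetCGW, (surjective_of_isIsoM hf).range_eq]

theorem exists_dist_of_image_compl_range (f : FinInj A B) (f₂ : FinInj A₂ B₂)
    (e : FinInj B B₂) (h : e.1 '' (Set.range f.1)ᶜ = (Set.range f₂.1)ᶜ) :
    ∃ eA : FinInj A A₂, finSetCGW.Dist f eA f₂ e := by
  have hmem : ∀ a, e.1 (f.1 a) ∈ Set.range f₂.1 := by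
    intro a
    by_contra hfa
    obtain ⟨b, hb, hba⟩ : e.1 (f.1 a) ∈ e.1 '' (Set.range f.1)ᶜ := by rw [h]; exact hfa
    exact hb ⟨a, (e.2 hba).symm⟩
  choose eA heA using hmem
  refine ⟨⟨eA, fun a a' haa' => f.2 (e.2 ?_)⟩, dist_of_image_compl_range heA h⟩
  rw [← heA, ← heA, haa']

theorem dist_initial_iff (g : FinInj A B) (m : FinInj K B) :
    finSetCGW.Dist (finSetCGW.initM A) (finSetCGW.initE K) m g ↔
      Set.range g.1 = (Set.range m.1)ᶜ := by
  have hempty : Set.range (finSetCGW.initM A).1 = ∅ :=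
    Set.range_eq_empty_iff.mpr ⟨fun x => Finset.notMem_empty x.1 x.2⟩
  refine ⟨fun h => ?_, fun h =>
    dist_of_image_compl_range (fun a => absurd a.2 (Finset.notMem_empty _)) ?_⟩
  · simpa [hempty] using image_compl_range_of_dist h
  · simpa [hempty] using h

theorem exists_isIsoM_comp_finComplIncl_of_dist {f : FinInj A B} {g : FinInj A P}
    {f' : FinInj P Q} {g' : FinInj B Q} (h : finSetCGW.Dist f g f' g') :
    ∃ φ : FinInj (finCompl g) (finCompl g'), finSetCGW.IsIsoM φ ∧
      finSetCGW.compM (finComplIncl g) f' = finSetCGW.compM φ (finComplIncl g') := by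
  have hrange : Set.range (finSetCGW.compM (finComplIncl g) f').1 =
      Set.range (finComplIncl g').1 := by
    rw [range_finComplIncl, ← image_compl_range_of_dist (dist_symm h), ← range_finComplIncl]
    exact Set.range_comp f'.1 (finComplIncl g).1
  obtain ⟨φ, ⟨hφ, hcomp⟩, -⟩ := existsUnique_isIsoM_comp_eq_of_range_eq _ _ hrange
  exact ⟨φ, hφ, hcomp.symm⟩

theorem exists_dist_of_comp_finComplIncl (f : FinInj A B) (f₂ : FinInj A₂ B₂)
    (ι : FinInj (finCompl f) (finCompl f₂)) (e : FinInj B B₂) (hι : finSetCGW.IsIsoM ι)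
    (hcomm : finSetCGW.compE (finComplIncl f) e = finSetCGW.compE ι (finComplIncl f₂)) :
    ∃ eA : FinInj A A₂, finSetCGW.Dist f eA f₂ e := by
  refine exists_dist_of_image_compl_range f f₂ e ?_
  rw [← range_finComplIncl, ← range_finComplIncl, ← Set.range_comp]
  exact (congrArg (fun u => Set.range u.1) hcomm).trans
    ((surjective_of_isIsoM hι).range_comp (finComplIncl f₂).1)

theorem exists_isIsoM_comp_finComplIncl_finComplIncl (g : FinInj A B) :
    ∃ ι : FinInj A (finCompl (finComplIncl g)), finSetCGW.IsIsoM ι ∧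
      finSetCGW.compM ι (finComplIncl (finComplIncl g)) = g := by
  obtain ⟨ι, hι, -⟩ := existsUnique_isIsoM_comp_eq_of_range_eq g (finComplIncl (finComplIncl g))
    (by rw [range_finComplIncl, range_finComplIncl, compl_compl])
  exact ⟨ι, hι⟩

theorem dist_initial_finComplIncl (g : FinInj A B) :
    finSetCGW.Dist (finSetCGW.initM A) (finSetCGW.initE (finCompl g)) (finComplIncl g) g := by
  rw [dist_initial_iff, range_finComplIncl, compl_compl]

theorem existsUnique_isIsoM_comp_finComplIncl_of_dist_initial (g : FinInj A B) (m : FinInj K B)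
    (h : finSetCGW.Dist (finSetCGW.initM A) (finSetCGW.initE K) m g) :
    ∃! φ : FinInj K (finCompl g), finSetCGW.IsIsoM φ ∧
      finSetCGW.compM φ (finComplIncl g) = m :=
  existsUnique_isIsoM_comp_eq_of_range_eq m _ <| by
    rw [range_finComplIncl, (dist_initial_iff g m).mp h, compl_compl]

/-- The sum `A ⊔ B`, realised inside `ℕ` as `2A ∪ (2B + 1)`. -/
theorem exists_dist_initial (A B : Finset ℕ) :
    ∃ (X : Finset ℕ) (m : FinInj B X) (e : FinInj A X),
      finSetCGW.Dist (finSetCGW.initM A) (finSetCGW.initE B) m e := by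
  let X := A.image (2 * ·) ∪ B.image (2 * · + 1)
  refine ⟨X, ⟨fun b => ⟨2 * b + 1, by simp [X, b.2]⟩, fun b b' h => by simpa using h⟩,
    ⟨fun a => ⟨2 * a, by simp [X, a.2]⟩, fun a a' h => by simpa using h⟩, ?_⟩
  refine (dist_initial_iff _ _).mpr (Set.ext fun ⟨x, hx⟩ => ?_)
  simp only [X, Finset.mem_union, Finset.mem_image] at hx
  simp only [Set.mem_range, Set.mem_compl_iff, Subtype.ext_iff, Subtype.exists, not_exists]
  rcases hx with ⟨a, ha, rfl⟩ | ⟨b, hb, rfl⟩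
  · exact iff_of_true ⟨a, ha, rfl⟩ fun b _ h => by omega
  · exact iff_of_false (fun ⟨a, _, h⟩ => by omega) fun h => h b hb rfl

end finSetCGW

open finSetCGW in
/-- The category `FinSet` of finite sets, with both e-morphisms and m-morphisms given
by injections, distinguished squares given by pushout squares of injections (which
are also pullback squares; encoded as commuting, jointly surjective pullback
squares), and `c` and `k` both sending an injection `A ↪ B` to the inclusion of the
complement `B ∖ A ↪ B`, satisfies the axioms of a CGW-category. -/
theorem finSetCGW_isCGW : finSetCGW.IsCGW := by
  exact
  { idE_comp _ := rfl
    compE_id _ := rfl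
    assocE _ _ _ := rfl
    idM_comp _ := rfl
    compM_id _ := rfl
    assocM _ _ _ := rfl
    initE_unique f := FinInj.eq_of_empty f _
    initM_unique f := FinInj.eq_of_empty f _
    monoE := compM_right_cancel
    monoM := compM_right_cancel
    phi_iso _ := id
    dist_isoSq₁ := dist_self_idM_of_isIsoM
    dist_isoSq₂ := dist_idM_self_of_isIsoM
    dist_horiz := dist_compM
    dist_vert h h₂ := dist_symm (dist_compM (dist_symm h) (dist_symm h₂))
    kDist := dist_initial_finComplIncl
    cDist f := dist_symm (dist_initial_finComplIncl f)
    k_unique := existsUnique_isIsoM_comp_finComplIncl_of_dist_initial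
    c_unique f e h := existsUnique_isIsoM_comp_finComplIncl_of_dist_initial f e (dist_symm h)
    distKer := exists_isIsoM_comp_finComplIncl_of_dist
    distCoker h := exists_isIsoM_comp_finComplIncl_of_dist (dist_symm h)
    c_full := exists_dist_of_comp_finComplIncl
    k_full g g₂ ι m hι hcomm :=
      (exists_dist_of_comp_finComplIncl g g₂ ι m hι hcomm).imp fun _ => dist_symm
    ck := exists_isIsoM_comp_finComplIncl_finComplIncl
    kc := exists_isIsoM_comp_finComplIncl_finComplIncl
    axA := exists_dist_initial }
end

section
/- In a pre-ACGW-category, in any commutative square with m-morphisms A ↣ B and C ↣ D horizontal and e-morphisms A ↠ C and B ↠ D vertical, if the bottom m-morphism f' : C ↣ D is an isomorphism, then the top m-morphism f : A ↣ B is also an isomorphism. -/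
open CategoryTheory

namespace CGWData

/-- `p, q` exhibit `P` as the pullback of the cospan of m-morphisms `f, g`. -/
def IsPullbackM (C : CGWData) {P A B X : C.Obj} (p : C.Mm P A) (q : C.Mm P B)
    (f : C.Mm A X) (g : C.Mm B X) : Prop :=
  C.compM p f = C.compM q g ∧
    ∀ {Z : C.Obj} (u : C.Mm Z A) (v : C.Mm Z B), C.compM u f = C.compM v g →
      ∃! w : C.Mm Z P, C.compM w p = u ∧ C.compM w q = v

/-- `p, q` exhibit `P` as the pullback of the cospan of e-morphisms `f, g`. -/
def IsPullbackE (C : CGWData) {P A B X : C.Obj} (p : C.Em P A) (q : C.Em P B)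
    (f : C.Em A X) (g : C.Em B X) : Prop :=
  C.compE p f = C.compE q g ∧
    ∀ {Z : C.Obj} (u : C.Em Z A) (v : C.Em Z B), C.compE u f = C.compE v g →
      ∃! w : C.Em Z P, C.compE w p = u ∧ C.compE w q = v

/-- `p, q` exhibit `P` as the pushout of the span of e-morphisms `f, g`. -/
def IsPushoutE (C : CGWData) {X A B P : C.Obj} (f : C.Em X A) (g : C.Em X B)
    (p : C.Em A P) (q : C.Em B P) : Prop :=
  C.compE f p = C.compE g q ∧
    ∀ {Z : C.Obj} (u : C.Em A Z) (v : C.Em B Z), C.compE f u = C.compE g v →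
      ∃! w : C.Em P Z, C.compE p w = u ∧ C.compE q w = v

end CGWData

/-- The data of a pre-ACGW-category: a CGW-category together with a notion of
commutative square (an enhanced double category), chosen pullbacks in `M` and in
`E` (axiom (P)), and chosen mixed pullbacks `A ⊘_X B` (axiom (U)). -/
structure PreACGWData extends CGWData where
  /-- `Comm top left bottom right` : commutative square, same orientation as `Dist`. -/
  Comm : ∀ {A B P Q}, Mm A B → Em A P → Mm P Q → Em B Q → Prop
  pbMObj : ∀ {A B X}, Mm A X → Mm B X → Obj
  pbMfst : ∀ {A B X} (f : Mm A X) (g : Mm B X), Mm (pbMObj f g) A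
  pbMsnd : ∀ {A B X} (f : Mm A X) (g : Mm B X), Mm (pbMObj f g) B
  pbEObj : ∀ {A B X}, Em A X → Em B X → Obj
  pbEfst : ∀ {A B X} (f : Em A X) (g : Em B X), Em (pbEObj f g) A
  pbEsnd : ∀ {A B X} (f : Em A X) (g : Em B X), Em (pbEObj f g) B
  /-- The mixed pullback `A ⊘_X B` of `f : A ↣ X` and `g : B ↠ X`. -/
  mpbObj : ∀ {A B X}, Mm A X → Em B X → Obj
  mpbM : ∀ {A B X} (f : Mm A X) (g : Em B X), Mm (mpbObj f g) B
  mpbE : ∀ {A B X} (f : Mm A X) (g : Em B X), Em (mpbObj f g) A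

namespace PreACGWData

variable (C : PreACGWData)

open CGWData in
/-- The axioms of a pre-ACGW-category: the underlying CGW-axioms; every
distinguished square is commutative; commutative squares paste; (P) `M` and `E` are
closed under pullbacks; (U) the mixed pullback squares are commutative, and `c` and
`k` extend to equivalences `Ar_○ M → Ar_× E` and `Ar_○ E → Ar_× M`, i.e. every
commutative square induces pullback squares on cokernels and kernels; (S) unions
along pullbacks of m-morphisms exist and their cokernels form pushout squares in
`E` (together with the dual statement). -/
structure IsPreACGW : Prop where
  isCGW : C.toCGWData.IsCGW
  dist_comm : ∀ {A B P Q : C.Obj} {f : C.Mm A B} {g : C.Em A P} {f' : C.Mm P Q}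
    {g' : C.Em B Q}, C.Dist f g f' g' → C.Comm f g f' g'
  comm_horiz : ∀ {A B P Q B₂ Q₂ : C.Obj} {f : C.Mm A B} {g : C.Em A P} {f' : C.Mm P Q}
    {g' : C.Em B Q} {f₂ : C.Mm B B₂} {f₂' : C.Mm Q Q₂} {g₂ : C.Em B₂ Q₂},
    C.Comm f g f' g' → C.Comm f₂ g' f₂' g₂ →
      C.Comm (C.compM f f₂) g (C.compM f' f₂') g₂
  comm_vert : ∀ {A B P Q P₂ Q₂ : C.Obj} {f : C.Mm A B} {g : C.Em A P} {f' : C.Mm P Q}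
    {g' : C.Em B Q} {g₂ : C.Em P P₂} {f₂ : C.Mm P₂ Q₂} {g₂' : C.Em Q Q₂},
    C.Comm f g f' g' → C.Comm f' g₂ f₂ g₂' →
      C.Comm f (C.compE g g₂) f₂ (C.compE g' g₂')
  pbM_isPullback : ∀ {A B X : C.Obj} (f : C.Mm A X) (g : C.Mm B X),
    IsPullbackM C.toCGWData (C.pbMfst f g) (C.pbMsnd f g) f g
  pbE_isPullback : ∀ {A B X : C.Obj} (f : C.Em A X) (g : C.Em B X),
    IsPullbackE C.toCGWData (C.pbEfst f g) (C.pbEsnd f g) f g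
  mpb_comm : ∀ {A B X : C.Obj} (f : C.Mm A X) (g : C.Em B X),
    C.Comm (C.mpbM f g) (C.mpbE f g) f g
  c_comm : ∀ {A B P Q : C.Obj} {f : C.Mm A B} {g : C.Em A P} {f' : C.Mm P Q}
    {g' : C.Em B Q}, C.Comm f g f' g' →
      ∃ u : C.Em (C.cObj f) (C.cObj f'),
        C.compE (C.cMor f) g' = C.compE u (C.cMor f') ∧
        IsPullbackE C.toCGWData u (C.cMor f) (C.cMor f') g'
  k_comm : ∀ {A B P Q : C.Obj} {f : C.Mm A B} {g : C.Em A P} {f' : C.Mm P Q}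
    {g' : C.Em B Q}, C.Comm f g f' g' →
      ∃ u : C.Mm (C.kObj g) (C.kObj g'),
        C.compM (C.kMor g) f' = C.compM u (C.kMor g') ∧
        IsPullbackM C.toCGWData u (C.kMor g) (C.kMor g') f'
  axS : ∀ {P A B X : C.Obj} (p : C.Mm P A) (q : C.Mm P B) (f : C.Mm A X)
    (g : C.Mm B X), IsPullbackM C.toCGWData p q f g →
      ∃ (U : C.Obj) (a : C.Mm A U) (b : C.Mm B U) (u : C.Mm U X),
        C.compM a u = f ∧ C.compM b u = g ∧ C.compM p a = C.compM q b ∧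
        ∃ (ea : C.Em (C.cObj u) (C.cObj f)) (eb : C.Em (C.cObj u) (C.cObj g))
          (ef : C.Em (C.cObj f) (C.cObj (C.compM p f)))
          (eg : C.Em (C.cObj g) (C.cObj (C.compM p f))),
          C.compE ea (C.cMor f) = C.cMor u ∧ C.compE eb (C.cMor g) = C.cMor u ∧
          C.compE ef (C.cMor (C.compM p f)) = C.cMor f ∧
          C.compE eg (C.cMor (C.compM p f)) = C.cMor g ∧
          IsPushoutE C.toCGWData ea eb ef eg
  axS' : ∀ {P A B X : C.Obj} (p : C.Em P A) (q : C.Em P B) (f : C.Em A X)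
    (g : C.Em B X), IsPullbackE C.toCGWData p q f g →
      ∃ (U : C.Obj) (a : C.Em A U) (b : C.Em B U) (u : C.Em U X),
        C.compE a u = f ∧ C.compE b u = g ∧ C.compE p a = C.compE q b

open CGWData in
/-- The axioms of an ACGW-category: a pre-ACGW-category additionally satisfying
axiom (PP): functorial pushout-like squares `B ⋆_A C` for cospans of m-morphisms,
which are pullback squares inducing isomorphisms of cokernels, and dually for
e-morphisms (inducing isomorphisms of kernels). -/
structure IsACGW : Prop where
  toIsPreACGW : C.IsPreACGW
  ppM : ∀ {A B X : C.Obj} (f : C.Mm A B) (g : C.Mm A X),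
    ∃ (D : C.Obj) (g' : C.Mm B D) (f' : C.Mm X D),
      IsPullbackM C.toCGWData f g g' f' ∧
      ∃ ψ : C.Em (C.cObj f) (C.cObj f'), C.IsIsoE ψ
  ppE : ∀ {A B X : C.Obj} (f : C.Em A B) (g : C.Em A X),
    ∃ (D : C.Obj) (g' : C.Em B D) (f' : C.Em X D),
      IsPullbackE C.toCGWData f g g' f' ∧
      ∃ ψ : C.Mm (C.kObj f) (C.kObj f'), C.IsIsoM ψ

end PreACGWData

namespace CGWData

variable {D : CGWData}

lemma IsCGW.isoM_id (h : D.IsCGW) (A : D.Obj) : D.IsIsoM (D.idM A) :=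
  ⟨D.idM A, h.idM_comp _, h.idM_comp _⟩

lemma IsCGW.isoM_comp (h : D.IsCGW) {A B E : D.Obj} {a : D.Mm A B} {b : D.Mm B E}
    (ha : D.IsIsoM a) (hb : D.IsIsoM b) : D.IsIsoM (D.compM a b) := by
  obtain ⟨a', ha1, ha2⟩ := ha
  obtain ⟨b', hb1, hb2⟩ := hb
  refine ⟨D.compM b' a', ?_, ?_⟩
  · rw [h.assocM, ← h.assocM b b' a', hb1, h.idM_comp, ha1]
  · rw [h.assocM, ← h.assocM a' a b, ha2, h.idM_comp, hb2]

/-- If `φ` is an iso and `φ ∘ k = id`, then `k` is an iso. -/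
lemma IsCGW.isoM_of_id_left (h : D.IsCGW) {K B : D.Obj} {φ : D.Mm B K} {k : D.Mm K B}
    (hφ : D.IsIsoM φ) (hk : D.compM φ k = D.idM B) : D.IsIsoM k := by
  obtain ⟨g, hg1, hg2⟩ := hφ
  have hkg : k = g := by
    calc k = D.compM (D.idM K) k := (h.idM_comp k).symm
    _ = D.compM (D.compM g φ) k := by rw [hg2]
    _ = D.compM g (D.compM φ k) := h.assocM ..
    _ = D.compM g (D.idM B) := by rw [hk]
    _ = g := h.compM_id g
  exact ⟨φ, by rw [hkg]; exact hg2, hk⟩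

/-- The kernel of the "zero" e-morphism `initE B : zero ↠ B` is all of `B`:
`kMor (initE B)` is an isomorphism. -/
lemma IsCGW.kMor_initE_iso (h : D.IsCGW) (B : D.Obj) : D.IsIsoM (D.kMor (D.initE B)) := by
  obtain ⟨mA, hDist⟩ := h.k_full (D.initE B) (D.initE B) (D.idM (D.kObj (D.initE B)))
    (D.idM B) (h.isoM_id _) (by rw [h.compM_id, h.idM_comp])
  rw [h.initM_unique mA] at hDist
  obtain ⟨φ, ⟨hφiso, hφ⟩, -⟩ := h.k_unique (D.initE B) (D.idM B) hDist
  exact h.isoM_of_id_left hφiso hφ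

end CGWData


/-- Lemma 5.10 of Campbell–Zakharevich: in a pre-ACGW-category, in any commutative
square with m-morphisms `f : A ↣ B` (top) and `f' : P ↣ Q` (bottom) horizontal and
e-morphisms `A ↠ P`, `B ↠ Q` vertical, if the bottom m-morphism `f'` is an
isomorphism then so is the top m-morphism `f`. -/
theorem comm_square_iso_transfer (C : PreACGWData) (hC : C.IsPreACGW)
    {A B P Q : C.Obj} (f : C.Mm A B) (g : C.Em A P) (f' : C.Mm P Q) (g' : C.Em B Q)
    (hsq : C.Comm f g f' g') (hf' : C.toCGWData.IsIsoM f') :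
    C.toCGWData.IsIsoM f := by
  have h := hC.isCGW
  -- kernels of the zero e-morphisms into P and Q are isomorphisms
  obtain ⟨kQinv, hkQ1, hkQ2⟩ := h.kMor_initE_iso Q
  -- compare the kernels of `initE P` and `initE Q` through the iso `f'`
  have hιiso : C.toCGWData.IsIsoM (C.compM (C.compM (C.kMor (C.initE P)) f') kQinv) :=
    h.isoM_comp (h.isoM_comp (h.kMor_initE_iso P) hf') ⟨C.kMor (C.initE Q), hkQ2, hkQ1⟩
  have hcond : C.compM (C.kMor (C.initE P)) f' =
      C.compM (C.compM (C.compM (C.kMor (C.initE P)) f') kQinv) (C.kMor (C.initE Q)) := by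
    rw [h.assocM, hkQ2, h.compM_id]
  obtain ⟨mA, hSf'⟩ := h.k_full (C.initE P) (C.initE Q)
    (C.compM (C.compM (C.kMor (C.initE P)) f') kQinv) f' hιiso hcond
  rw [h.initM_unique mA] at hSf'
  -- hence the cokernel of `f'` is zero: `initE (cObj f')` is an isomorphism (via ψ)
  obtain ⟨ψ, ⟨hψiso, hψc⟩, -⟩ := h.c_unique f' (C.initE Q) hSf'
  obtain ⟨ψ', hψ1, hψ2⟩ := hψiso
  -- the cokernel comparison pullback square from the commutative square
  obtain ⟨u, hcu, hpb⟩ := hC.c_comm hsq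
  -- `initE (cObj f)` is an isomorphism, with inverse `u ∘ ψ'`
  have hWu : C.compE (C.compE (C.compE u ψ') (C.initE (C.cObj f))) u = u := by
    rw [h.assocE, h.initE_unique (C.compE (C.initE (C.cObj f)) u), ← h.initE_unique ψ,
      h.assocE, hψ2, h.compE_id]
  have hWc : C.compE (C.compE (C.compE u ψ') (C.initE (C.cObj f))) (C.cMor f) =
      C.cMor f := by
    rw [h.assocE, h.initE_unique (C.compE (C.initE (C.cObj f)) (C.cMor f))]
    apply h.monoE g'
    rw [h.assocE, h.initE_unique (C.compE (C.initE B) g'), ← hψc,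
      h.assocE, ← h.assocE ψ' ψ, hψ2, h.idE_comp]
    exact hpb.1
  obtain ⟨w, -, hwu⟩ := hpb.2 u (C.cMor f) hpb.1
  have hεinv : C.compE (C.compE u ψ') (C.initE (C.cObj f)) = C.idE (C.cObj f) := by
    have h1 := hwu _ ⟨hWu, hWc⟩
    have h2 := hwu _ ⟨h.idE_comp u, h.idE_comp (C.cMor f)⟩
    rw [h1, h2]
  have hηiso : C.toCGWData.IsIsoE (C.initE (C.cObj f)) := by
    refine ⟨C.compE u ψ', ?_, hεinv⟩
    exact (h.initE_unique _).trans (h.initE_unique (C.idE C.zero)).symm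
  -- paste the iso square for `initE (cObj f)` with the kernel square of `cMor f`
  have S1 := h.dist_isoSq₂ (C.initE (C.cObj f)) hηiso
  rw [h.initM_unique (C.phi (C.initE (C.cObj f)))] at S1
  have T := h.dist_vert S1 (h.kDist (C.cMor f))
  rw [h.initE_unique (C.compE (C.idE C.zero) (C.initE (C.kObj (C.cMor f)))),
    h.initE_unique (C.compE (C.initE (C.cObj f)) (C.cMor f)),
    h.initM_unique (C.idM C.zero)] at T
  -- so the kernel of `cMor f` agrees with the kernel of `initE B`, which is `B`
  obtain ⟨φ₁, ⟨hφ₁iso, hφ₁⟩, -⟩ := h.k_unique (C.initE B) (C.kMor (C.cMor f)) T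
  have hkcf : C.toCGWData.IsIsoM (C.kMor (C.cMor f)) := by
    rw [← hφ₁]
    exact h.isoM_comp hφ₁iso (h.kMor_initE_iso B)
  obtain ⟨ι, hιiso2, hι⟩ := h.kc f
  rw [← hι]
  exact h.isoM_comp hιiso2 hkcf
end

section
/- Let C be a CGW-category with a full CGW-subcategory A that is closed under subobjects, quotients, and extensions. Define M_A to be the class of m-morphisms f : A ↣ B whose cokernel A^{c/f} lies in A, and E_A similarly for e-morphisms. Then M_A and E_A are subcategories of M and E respectively, and they satisfy the 1-of-3 property: for composable m-morphisms f : A ↣ B and g : B ↣ C, if g∘f ∈ M_A then both f ∈ M_A and g ∈ M_A (and similarly for E_A). -/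
open CategoryTheory

/-- Lemma 7.3 of Campbell–Zakharevich: let `C` be a CGW-category and `A` a full
CGW-subcategory (given by the predicate `P` on objects, containing `∅`) closed under
subobjects, quotients, and extensions.  Then the classes `M_A` (m-morphisms with
cokernel in `A`) and `E_A` (e-morphisms with kernel in `A`) are subcategories of `M`
and `E` (containing identities and closed under composition) satisfying the 1-of-3
property: if a composite lies in `M_A` (resp. `E_A`) then so do both factors. -/
theorem MA_EA_one_of_three (C : CGWData) (hC : C.IsCGW) (P : C.Obj → Prop)
    (hzero : P C.zero)
    (hsub : ∀ {A B : C.Obj} (f : C.Mm A B), P B → P A)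
    (hquot : ∀ {A B : C.Obj} (g : C.Em A B), P B → P A)
    (hext : ∀ {A B X Q : C.Obj} {f : C.Mm A B} {g : C.Em A X} {f' : C.Mm X Q}
      {g' : C.Em B Q}, C.Dist f g f' g' → P A → P B → P X → P Q) :
    (∀ A : C.Obj, P (C.cObj (C.idM A))) ∧
    (∀ A : C.Obj, P (C.kObj (C.idE A))) ∧
    (∀ {A B D : C.Obj} (f : C.Mm A B) (g : C.Mm B D),
      P (C.cObj (C.compM f g)) ↔ P (C.cObj f) ∧ P (C.cObj g)) ∧
    (∀ {A B D : C.Obj} (f : C.Em A B) (g : C.Em B D),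
      P (C.kObj (C.compE f g)) ↔ P (C.kObj f) ∧ P (C.kObj g)) := by
  -- basic iso facts
  have isoM_inv : ∀ {A B : C.Obj} {f : C.Mm A B}, C.IsIsoM f →
      ∃ g : C.Mm B A, C.IsIsoM g ∧ C.compM f g = C.idM A ∧ C.compM g f = C.idM B := by
    rintro A B f ⟨g, h1, h2⟩; exact ⟨g, ⟨f, h2, h1⟩, h1, h2⟩
  have isoE_inv : ∀ {A B : C.Obj} {f : C.Em A B}, C.IsIsoE f →
      ∃ g : C.Em B A, C.IsIsoE g ∧ C.compE f g = C.idE A ∧ C.compE g f = C.idE B := by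
    rintro A B f ⟨g, h1, h2⟩; exact ⟨g, ⟨f, h2, h1⟩, h1, h2⟩
  have isoM_comp : ∀ {A B D : C.Obj} {f : C.Mm A B} {g : C.Mm B D},
      C.IsIsoM f → C.IsIsoM g → C.IsIsoM (C.compM f g) := by
    rintro A B D f g ⟨f', hf1, hf2⟩ ⟨g', hg1, hg2⟩
    refine ⟨C.compM g' f', ?_, ?_⟩
    · calc C.compM (C.compM f g) (C.compM g' f')
          = C.compM f (C.compM (C.compM g g') f') := by
            rw [hC.assocM, hC.assocM]
        _ = C.idM A := by rw [hg1, hC.idM_comp, hf1]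
    · calc C.compM (C.compM g' f') (C.compM f g)
          = C.compM g' (C.compM (C.compM f' f) g) := by
            rw [hC.assocM, hC.assocM]
        _ = C.idM D := by rw [hf2, hC.idM_comp, hg2]
  have isoE_comp : ∀ {A B D : C.Obj} {f : C.Em A B} {g : C.Em B D},
      C.IsIsoE f → C.IsIsoE g → C.IsIsoE (C.compE f g) := by
    rintro A B D f g ⟨f', hf1, hf2⟩ ⟨g', hg1, hg2⟩
    refine ⟨C.compE g' f', ?_, ?_⟩
    · calc C.compE (C.compE f g) (C.compE g' f')
          = C.compE f (C.compE (C.compE g g') f') := by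
            rw [hC.assocE, hC.assocE]
        _ = C.idE A := by rw [hg1, hC.idE_comp, hf1]
    · calc C.compE (C.compE g' f') (C.compE f g)
          = C.compE g' (C.compE (C.compE f' f) g) := by
            rw [hC.assocE, hC.assocE]
        _ = C.idE D := by rw [hf2, hC.idE_comp, hg2]
  -- identities
  have hMid : ∀ A : C.Obj, P (C.cObj (C.idM A)) := by
    intro A
    -- build the square Dist (initM zero) (initE A) (idM A) (initE A) via k_full
    obtain ⟨mA, hsq⟩ := hC.k_full (C.initE A) (C.initE A)
      (C.idM (C.kObj (C.initE A))) (C.idM A)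
      ⟨C.idM _, hC.idM_comp _, hC.idM_comp _⟩
      (by rw [hC.compM_id, hC.idM_comp])
    rw [hC.initM_unique mA] at hsq
    obtain ⟨ψ, ⟨hψiso, -⟩, -⟩ := hC.c_unique (C.idM A) (C.initE A) hsq
    obtain ⟨ψ', -, -, -⟩ := isoE_inv hψiso
    exact hquot ψ' hzero
  have hEid : ∀ A : C.Obj, P (C.kObj (C.idE A)) := by
    intro A
    obtain ⟨eA, hsq⟩ := hC.c_full (C.initM A) (C.initM A)
      (C.idE (C.cObj (C.initM A))) (C.idE A)
      ⟨C.idE _, hC.idE_comp _, hC.idE_comp _⟩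
      (by rw [hC.compE_id, hC.idE_comp])
    rw [hC.initE_unique eA] at hsq
    obtain ⟨φ, ⟨hφiso, -⟩, -⟩ := hC.k_unique (C.idE A) (C.initM A) hsq
    obtain ⟨φ', -, -, -⟩ := isoM_inv hφiso
    exact hsub φ' hzero
  refine ⟨hMid, hEid, ?_, ?_⟩
  · -- composites of m-morphisms
    intro A B D f g
    obtain ⟨ι₀, hι₀iso, hι₀⟩ := hC.kc f
    obtain ⟨ι₁, hι₁iso, hι₁⟩ := hC.kc (C.compM f g)
    obtain ⟨ι₀', hι₀'iso, hinv1, hinv2⟩ := isoM_inv hι₀iso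
    have hker : C.kMor (C.cMor f) = C.compM ι₀' f := by
      conv_lhs => rw [← hC.idM_comp (C.kMor (C.cMor f)), ← hinv2, hC.assocM, hι₀]
    obtain ⟨mA, hsq⟩ := hC.k_full (C.cMor f) (C.cMor (C.compM f g))
      (C.compM ι₀' ι₁) g (isoM_comp hι₀'iso hι₁iso)
      (by rw [hker, hC.assocM, hC.assocM, hι₁])
    obtain ⟨ψ, hψiso, -⟩ := hC.distCoker hsq
    obtain ⟨ψ', -, -, -⟩ := isoE_inv hψiso
    constructor
    · intro h
      refine ⟨hsub mA h, ?_⟩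
      exact hquot ψ' (hquot (C.cMor mA) h)
    · rintro ⟨hf, hg⟩
      exact hext (hC.cDist mA) hzero (hquot ψ hg) hf
  · -- composites of e-morphisms
    intro A B D f g
    obtain ⟨ι₀, hι₀iso, hι₀⟩ := hC.ck f
    obtain ⟨ι₁, hι₁iso, hι₁⟩ := hC.ck (C.compE f g)
    obtain ⟨ι₀', hι₀'iso, hinv1, hinv2⟩ := isoE_inv hι₀iso
    have hcok : C.cMor (C.kMor f) = C.compE ι₀' f := by
      conv_lhs => rw [← hC.idE_comp (C.cMor (C.kMor f)), ← hinv2, hC.assocE, hι₀]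
    obtain ⟨eA, hsq⟩ := hC.c_full (C.kMor f) (C.kMor (C.compE f g))
      (C.compE ι₀' ι₁) g (isoE_comp hι₀'iso hι₁iso)
      (by rw [hcok, hC.assocE, hC.assocE, hι₁])
    obtain ⟨φ, hφiso, -⟩ := hC.distKer hsq
    obtain ⟨φ', -, -, -⟩ := isoM_inv hφiso
    constructor
    · intro h
      refine ⟨hquot eA h, ?_⟩
      exact hsub φ' (hsub (C.kMor eA) h)
    · rintro ⟨hf, hg⟩
      exact hext (hC.kDist eA) hzero hf (hsub φ hg)
end
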